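/- arXiv:2106.07407 — 2 statements merged into one kernel-verified Lean document; each statement's English description precedes it below -/
import Mathlib

section
/- (Peetre's lemma) Let E be a Banach space, F and G normed vector spaces, A : E → F and B : E → G bounded linear operators. Suppose there exists C > 0 such that ‖u‖_E ≤ C(‖Au‖_F + ‖Bu‖_G) for all u ∈ E, and B is compact. Then A has closed range in F and finite-dimensional kernel. -/
/-!
The estimate says that `u ↦ (A u, B u)` is antilipschitz. Since `B` maps bounded sets to totally
bounded ones, a bounded set whose image under `A` is totally bounded is itself totally bounded.
Applied to the unit ball of `ker A` this gives finite dimension (Riesz). Splitting off `ker A` by a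
closed complement `X`, the same principle shows that `A` is bounded below on `X`: a normalized
sequence with `A uₙ → 0` would have a limit point of norm one in `ker A ∩ X = 0`. Hence
`A '' X = range A` is complete, so closed.
-/

open Bornology Filter Function Metric Set Topology
open scoped NNReal

theorem TotallyBounded.prod {α β : Type*} [UniformSpace α] [UniformSpace β] {s : Set α}
    {t : Set β} (hs : TotallyBounded s) (ht : TotallyBounded t) : TotallyBounded (s ×ˢ t) := by
  rw [totallyBounded_iff_ultrafilter] at hs ht ⊢
  intro f hf
  rw [cauchy_prod_iff]
  exact ⟨hs (f.map Prod.fst)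
      ((tendsto_principal_principal.2 fun _ h ↦ (mem_prod.1 h).1).mono_left hf),
    ht (f.map Prod.snd)
      ((tendsto_principal_principal.2 fun _ h ↦ (mem_prod.1 h).2).mono_left hf)⟩

namespace ContinuousLinearMap

section NontriviallyNormedField

variable {𝕜 E F G : Type*} [NontriviallyNormedField 𝕜]
  [NormedAddCommGroup E] [NormedSpace 𝕜 E] [NormedAddCommGroup F] [NormedSpace 𝕜 F]
  [NormedAddCommGroup G] [NormedSpace 𝕜 G] {A : E →L[𝕜] F} {B : E →L[𝕜] G} {C : ℝ}

theorem antilipschitz_prod_of_norm_le_mul_add (hC : 0 < C)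
    (hineq : ∀ u, ‖u‖ ≤ C * (‖A u‖ + ‖B u‖)) :
    AntilipschitzWith (2 * C).toNNReal (A.prod B) :=
  (A.prod B).antilipschitz_of_bound fun u ↦ by
    rw [Real.coe_toNNReal _ (by positivity), prod_apply, Prod.norm_def]
    nlinarith [hineq u, le_max_left ‖A u‖ ‖B u‖, le_max_right ‖A u‖ ‖B u‖]

theorem totallyBounded_of_totallyBounded_image (hC : 0 < C)
    (hineq : ∀ u, ‖u‖ ≤ C * (‖A u‖ + ‖B u‖)) (hB : IsCompactOperator B) {s : Set E}
    (hs : IsBounded s) (hAs : TotallyBounded (A '' s)) : TotallyBounded s := by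
  have hBs : TotallyBounded (B '' s) :=
    (hB.isCompact_closure_image_of_isVonNBounded
      (NormedSpace.isVonNBounded_iff 𝕜 |>.2 hs)).totallyBounded.subset subset_closure
  rw [← totallyBounded_image_iff ((antilipschitz_prod_of_norm_le_mul_add hC hineq).isUniformInducing
    (A.prod B).uniformContinuous)]
  refine (hAs.prod hBs).subset ?_
  rintro _ ⟨u, hu, rfl⟩
  exact ⟨mem_image_of_mem A hu, mem_image_of_mem B hu⟩

theorem finiteDimensional_ker_of_norm_le_mul_add [CompleteSpace 𝕜] (hC : 0 < C)
    (hineq : ∀ u, ‖u‖ ≤ C * (‖A u‖ + ‖B u‖)) (hB : IsCompactOperator B) :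
    FiniteDimensional 𝕜 (LinearMap.ker (A : E →ₗ[𝕜] F)) := by
  set K := LinearMap.ker (A : E →ₗ[𝕜] F)
  have hball : TotallyBounded (closedBall (0 : K) 1) := by
    refine totallyBounded_of_totallyBounded_image (A := A.comp K.subtypeL) (B := B.comp K.subtypeL)
      hC (fun u ↦ hineq u) (hB.comp_clm _) isBounded_closedBall
      ((finite_singleton 0).totallyBounded.subset ?_)
    rintro _ ⟨u, -, rfl⟩
    exact u.2
  exact .of_totallyBounded_nhds_zero 𝕜 (closedBall_mem_nhds 0 one_pos) hball

end NontriviallyNormedField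

section RCLike

variable {𝕜 E F G : Type*} [RCLike 𝕜]
  [NormedAddCommGroup E] [NormedSpace 𝕜 E] [NormedAddCommGroup F] [NormedSpace 𝕜 F]
  [NormedAddCommGroup G] [NormedSpace 𝕜 G] {A : E →L[𝕜] F} {B : E →L[𝕜] G} {C : ℝ}

theorem antilipschitz_of_forall_norm_eq_one (f : E →L[𝕜] F) {K : ℝ≥0}
    (h : ∀ u, ‖u‖ = 1 → 1 ≤ K * ‖f u‖) : AntilipschitzWith K f := by
  refine f.antilipschitz_of_bound fun u ↦ ?_
  rcases eq_or_ne u 0 with rfl | hu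
  · simp
  have hu_pos : 0 < ‖u‖ := norm_pos_iff.2 hu
  have := h _ (norm_smul_inv_norm (𝕜 := 𝕜) hu)
  rw [map_smul, norm_smul, norm_inv, RCLike.norm_ofReal, abs_norm] at this
  rwa [mul_left_comm, ← div_eq_inv_mul, one_le_div hu_pos] at this

theorem exists_antilipschitzWith_of_injective [CompleteSpace E] (hC : 0 < C)
    (hineq : ∀ u, ‖u‖ ≤ C * (‖A u‖ + ‖B u‖)) (hB : IsCompactOperator B) (hA : Injective A) :
    ∃ K, AntilipschitzWith K A := by
  by_contra! hK
  have hseq : ∀ n : ℕ, ∃ u, ‖u‖ = 1 ∧ (n + 1) * ‖A u‖ < 1 := by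
    intro n
    by_contra! h
    exact hK _ (A.antilipschitz_of_forall_norm_eq_one (K := n + 1) fun u hu ↦ mod_cast h u hu)
  choose u hu_norm hAu using hseq
  have hAu_lim : Tendsto (A ∘ u) atTop (𝓝 0) :=
    squeeze_zero_norm (fun n ↦ ((lt_div_iff₀' (by positivity)).2 (hAu n)).le)
      tendsto_one_div_add_atTop_nhds_zero_nat
  have hu_tb : TotallyBounded (range u) := by
    refine totallyBounded_of_totallyBounded_image hC hineq hB ?_ ?_
    · exact isBounded_iff_forall_norm_le.2 ⟨1, by simp [hu_norm]⟩
    · rw [← range_comp]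
      exact hAu_lim.isCompact_insert_range.totallyBounded.subset (subset_insert _ _)
  obtain ⟨x, -, φ, hφ, hux⟩ := hu_tb.closure.isCompact_of_isComplete isClosed_closure.isComplete
    |>.tendsto_subseq fun n ↦ subset_closure (mem_range_self n)
  have hx_norm : ‖x‖ = 1 :=
    tendsto_nhds_unique ((continuous_norm.tendsto x).comp hux)
      (tendsto_const_nhds.congr fun n ↦ (hu_norm (φ n)).symm)
  have hAx : A x = 0 :=
    tendsto_nhds_unique ((A.continuous.tendsto x).comp hux) (hAu_lim.comp hφ.tendsto_atTop)
  simp [(map_eq_zero_iff A hA).1 hAx] at hx_norm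

theorem isClosed_range_of_norm_le_mul_add [CompleteSpace E] (hC : 0 < C)
    (hineq : ∀ u, ‖u‖ ≤ C * (‖A u‖ + ‖B u‖)) (hB : IsCompactOperator B) : IsClosed (range A) := by
  have := finiteDimensional_ker_of_norm_le_mul_add hC hineq hB
  obtain ⟨P, hP⟩ :=
    Submodule.ClosedComplemented.of_finiteDimensional (LinearMap.ker (A : E →ₗ[𝕜] F))
  set X := P.ker
  have hinj : Injective (A.comp X.subtypeL) := by
    refine (injective_iff_map_eq_zero _).2 fun x hx ↦ ?_
    have h := hP ⟨x, hx⟩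
    rw [show P x = 0 from x.2] at h
    exact Subtype.ext (by simpa using congrArg Subtype.val h.symm)
  have hrange : range (A.comp X.subtypeL) = range A := by
    refine Subset.antisymm (range_subset_iff.2 fun x ↦ mem_range_self (x : E)) ?_
    rintro _ ⟨u, rfl⟩
    refine ⟨⟨u - P u, ?_⟩, ?_⟩
    · simp [X, hP]
    · simp
  obtain ⟨K, hK⟩ := exists_antilipschitzWith_of_injective (A := A.comp X.subtypeL)
    (B := B.comp X.subtypeL) hC (fun u ↦ hineq u) (hB.comp_clm _) hinj
  rw [← hrange]
  exact hK.isClosed_range (A.comp X.subtypeL).uniformContinuous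

end RCLike

end ContinuousLinearMap

/-- **Peetre's lemma.** Let `E` be a Banach space, `F`, `G` normed spaces,
`A : E → F` and `B : E → G` bounded linear operators. If there is `C > 0` with
`‖u‖ ≤ C(‖Au‖ + ‖Bu‖)` for all `u ∈ E`, and `B` is compact, then `A` has closed range
and finite-dimensional kernel. -/
theorem stmt_11 {E F G : Type*}
    [NormedAddCommGroup E] [NormedSpace ℝ E] [CompleteSpace E]
    [NormedAddCommGroup F] [NormedSpace ℝ F]
    [NormedAddCommGroup G] [NormedSpace ℝ G]
    (A : E →L[ℝ] F) (B : E →L[ℝ] G) (C : ℝ) (hC : 0 < C)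
    (hineq : ∀ u : E, ‖u‖ ≤ C * (‖A u‖ + ‖B u‖))
    (hB : IsCompactOperator (B : E → G)) :
    IsClosed (Set.range A) ∧ FiniteDimensional ℝ (LinearMap.ker (A : E →ₗ[ℝ] F)) :=
  ⟨ContinuousLinearMap.isClosed_range_of_norm_le_mul_add hC hineq hB,
    ContinuousLinearMap.finiteDimensional_ker_of_norm_le_mul_add hC hineq hB⟩
end

section
/- In ℝ², the function φ(x) = 2/(log 2 · √(1−x²)) on the segment 𝔻₁ = (−1,1) satisfies −(1/2π)∫_{−1}^{1} log|x−y| φ(y) dy = 1 for all x ∈ (−1,1), and ∫_{−1}^{1} φ(x) dx = 2π/log 2. -/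
/-!
Substituting `y = cos θ` turns `φ(y) dy` into the constant density `2 / log 2` on `(0, π)`, so
both identities reduce to `∫₀^π log |cos ψ - cos θ| dθ = -π log 2`. By the product formula
`cos θ - cos ψ = -2 sin((θ + ψ)/2) sin((θ - ψ)/2)`, over the full period `(0, 2π)` this integral
splits into `2π log 2` plus two integrals of `log |sin|` over intervals of length `π`, each equal to
`-π log 2`; the symmetry `θ ↦ 2π - θ` halves it.
-/

open MeasureTheory Set Real

noncomputable section

/-- The 2d equilibrium distribution `φ(x) = 2/(log 2 · √(1-x²))` on the segment `(-1,1)`. -/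
def phiEq (x : ℝ) : ℝ := 2 / (Real.log 2 * Real.sqrt (1 - x ^ 2))

lemma periodic_log_sin : Function.Periodic (fun u => log (sin u)) π := fun u => by
  simp only [sin_add_pi, log_neg_eq_log]

lemma integral_log_sin_div_two_add (c : ℝ) :
    ∫ θ in 0..2 * π, log (sin (θ / 2 + c)) = -2 * π * log 2 := by
  rw [intervalIntegral.integral_comp_div_add (f := fun u => log (sin u)) two_ne_zero,
    zero_div, zero_add, mul_div_cancel_left₀ _ two_ne_zero, add_comm,
    periodic_log_sin.intervalIntegral_add_eq c 0, zero_add, integral_log_sin_zero_pi,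
    smul_eq_mul]
  ring

lemma ae_cos_ne_cos (φ : ℝ) : ∀ᵐ θ : ℝ, cos θ ≠ cos φ := by
  have hsub : {θ | cos θ = cos φ} ⊆
      (range fun k : ℤ => 2 * k * π + φ) ∪ range fun k : ℤ => 2 * k * π - φ := by
    intro θ hθ
    obtain ⟨k, hk | hk⟩ := cos_eq_cos_iff.1 (Eq.symm hθ)
    · exact Or.inl ⟨k, hk.symm⟩
    · exact Or.inr ⟨k, hk.symm⟩
  exact ((countable_range _).union (countable_range _)).mono hsub |>.ae_notMem volume

lemma log_cos_sub_cos {θ φ : ℝ} (h : cos θ ≠ cos φ) :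
    log (cos θ - cos φ) = log 2 + log (sin (θ / 2 + φ / 2)) + log (sin (θ / 2 + -(φ / 2))) := by
  have hprod := cos_sub_cos θ φ
  have h := sub_ne_zero.2 h
  rw [hprod] at h
  rw [hprod, neg_mul, neg_mul, log_neg_eq_log, log_mul (by simpa using left_ne_zero_of_mul h)
    (right_ne_zero_of_mul h), log_mul two_ne_zero (right_ne_zero_of_mul (left_ne_zero_of_mul h))]
  ring_nf

lemma intervalIntegrable_log_sin_div_two_add (c a b : ℝ) :
    IntervalIntegrable (fun θ => log (sin (θ / 2 + c))) volume a b :=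
  MeromorphicOn.intervalIntegrable_log fun _ _ => by fun_prop

lemma integral_log_cos_sub_cos_zero_two_pi (φ : ℝ) :
    ∫ θ in 0..2 * π, log (cos θ - cos φ) = -2 * π * log 2 := by
  have hplus := intervalIntegrable_log_sin_div_two_add (φ / 2) 0 (2 * π)
  have hminus := intervalIntegrable_log_sin_div_two_add (-(φ / 2)) 0 (2 * π)
  rw [intervalIntegral.integral_congr_ae (g := fun θ =>
      log 2 + log (sin (θ / 2 + φ / 2)) + log (sin (θ / 2 + -(φ / 2))))
      ((ae_cos_ne_cos φ).mono fun θ h _ => log_cos_sub_cos h),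
    intervalIntegral.integral_add (intervalIntegrable_const.add hplus) hminus,
    intervalIntegral.integral_add intervalIntegrable_const hplus,
    intervalIntegral.integral_const, integral_log_sin_div_two_add,
    integral_log_sin_div_two_add, smul_eq_mul]
  ring

lemma integral_comp_cos_zero_two_pi {f : ℝ → ℝ}
    (hf : IntervalIntegrable (fun θ => f (cos θ)) volume 0 (2 * π)) :
    ∫ θ in 0..2 * π, f (cos θ) = 2 * ∫ θ in 0..π, f (cos θ) := by
  have hπ := pi_pos
  rw [← intervalIntegral.integral_add_adjacent_intervals (b := π)
    (hf.mono_set (uIcc_subset_uIcc_left (by simp [uIcc_of_le, hπ.le]; linarith)))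
    (hf.mono_set (uIcc_subset_uIcc_right (by simp [uIcc_of_le, hπ.le]; linarith)))]
  have := intervalIntegral.integral_comp_sub_left (fun θ => f (cos θ)) (a := 0) (b := π) (2 * π)
  simp only [cos_two_pi_sub] at this
  rw [this]
  ring_nf

lemma integral_log_abs_cos_sub_cos (φ : ℝ) :
    ∫ θ in 0..π, log |cos φ - cos θ| = -π * log 2 := by
  have hint : IntervalIntegrable (fun θ => log (cos θ - cos φ)) volume 0 (2 * π) :=
    MeromorphicOn.intervalIntegrable_log fun _ _ => by fun_prop
  have h := integral_comp_cos_zero_two_pi (f := fun y => log (y - cos φ)) hint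
  simp only [integral_log_cos_sub_cos_zero_two_pi] at h
  simp only [log_abs, abs_sub_comm (cos φ)]
  linarith

lemma image_cos_Ioo_zero_pi : cos '' Ioo 0 π = Ioo (-1) 1 := by
  simpa using continuous_cos.continuousOn.image_Ioo_of_strictAntiOn pi_pos.le strictAntiOn_cos

lemma integral_Ioo_neg_one_one_eq_integral_cos (g : ℝ → ℝ) :
    ∫ y in Ioo (-1) 1, g y = ∫ θ in Ioo 0 π, sin θ * g (cos θ) := by
  rw [← image_cos_Ioo_zero_pi, integral_image_eq_integral_abs_deriv_smul measurableSet_Ioo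
    (fun θ _ => (hasDerivAt_cos θ).hasDerivWithinAt) (injOn_cos.mono Ioo_subset_Icc_self) g]
  refine setIntegral_congr_fun measurableSet_Ioo fun θ hθ => ?_
  rw [abs_neg, abs_of_pos (sin_pos_of_pos_of_lt_pi hθ.1 hθ.2), smul_eq_mul]

lemma sin_mul_phiEq_cos {θ : ℝ} (hθ : θ ∈ Ioo 0 π) : sin θ * phiEq (cos θ) = 2 / log 2 := by
  have hsin := sin_pos_of_pos_of_lt_pi hθ.1 hθ.2
  have hlog2 : log 2 ≠ 0 := (log_pos one_lt_two).ne'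
  rw [phiEq, ← sin_sq, sqrt_sq hsin.le]
  field_simp

/-- The function `φ(x) = 2/(log 2 √(1-x²))` satisfies
`-(1/2π)∫_{-1}^1 log|x-y| φ(y) dy = 1` on `(-1,1)` and `∫_{-1}^1 φ = 2π/log 2`. -/
theorem stmt_13 :
    (∀ x ∈ Ioo (-1 : ℝ) 1,
      -(1 / (2 * π)) * ∫ y in Ioo (-1 : ℝ) 1, Real.log |x - y| * phiEq y = 1) ∧
    ∫ x in Ioo (-1 : ℝ) 1, phiEq x = 2 * π / Real.log 2 := by
  have hlog2 : log 2 ≠ 0 := (log_pos one_lt_two).ne'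
  constructor
  · intro x hx
    obtain ⟨φ, rfl⟩ : ∃ φ, cos φ = x := ⟨arccos x, cos_arccos hx.1.le hx.2.le⟩
    rw [integral_Ioo_neg_one_one_eq_integral_cos, setIntegral_congr_fun measurableSet_Ioo
        (g := fun θ => 2 / log 2 * log |cos φ - cos θ|)
        fun θ hθ => by rw [mul_left_comm, sin_mul_phiEq_cos hθ, mul_comm],
      integral_const_mul, ← integral_Ioc_eq_integral_Ioo,
      ← intervalIntegral.integral_of_le pi_pos.le, integral_log_abs_cos_sub_cos]
    field_simp
  · rw [integral_Ioo_neg_one_one_eq_integral_cos,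
      setIntegral_congr_fun measurableSet_Ioo fun θ hθ => sin_mul_phiEq_cos hθ,
      setIntegral_const, volume_real_Ioo_of_le pi_pos.le, sub_zero, smul_eq_mul]
    field_simp
end
end
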